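/- Theorem 5 (continuous opinion model): let m ∈ L^∞(μ), m ≥ 0, satisfy Γ_{BK}(c) m(c) = T_{BK}* m(c) for μ-a.e. c and ∫₀^∞ m dμ = 1, and suppose there exist measurable ψ : (0,∞) → (0,∞) and ν₂ > 0 with ν₂ ψ(c₁) ≤ BK(c,c₁) for μ⊗μ-a.e. (c,c₁) and ν₁ := ∫₀^∞ m(c)²/ψ(c) dμ(c) < ∞. Let m_w : (0,∞) × [0,∞) → ℝ be bounded and measurable, differentiable in t for each c with ∂ₜ m_w(c,t) = T_{BK} m_w(·,t)(c) − Γ_{BK}(c) m_w(c,t); set ρ_w := ∫₀^∞ m(c) m_w(c,0) dμ(c); and assume differentiation under the integral sign is valid for t ↦ ∫ m·m_w(·,t) dμ and for E(t) := ∫₀^∞ m(c)(m_w(c,t) − ρ_w)² dμ(c) (with E′(t) = ∫ 2m(m_w − ρ_w)∂ₜm_w dμ). Then ∫₀^∞ m(c) m_w(c,t) dμ(c) = ρ_w for all t ≥ 0, and there is ν > 0 depending only on ν₁, ν₂ with E(t) ≤ E(0) e^{−νt} for all t ≥ 0. Hence m_w^∞ ≡ ρ_w is the asymptotically stable equilibrium.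 -/
import Mathlib


open MeasureTheory Set

/-- The finite measure on `(0,∞)` with density `g` with respect to Lebesgue measure. -/
noncomputable def netMeasure (g : ℝ → ℝ) : Measure ℝ :=
  (volume.restrict (Ioi (0:ℝ))).withDensity (fun c => ENNReal.ofReal (g c))

/-- `Γ_{BK}(c) := ∫₀^∞ B(c,c₁)K(c,c₁) g(c₁) dc₁`. -/
noncomputable def GamBK (B K : ℝ → ℝ → ℝ) (g : ℝ → ℝ) (c : ℝ) : ℝ :=
  ∫ c₁ in Ioi (0:ℝ), B c c₁ * K c c₁ * g c₁

/-- `T_{BK} h(c) := ∫₀^∞ B(c,c₁)K(c,c₁) h(c₁) g(c₁) dc₁`. -/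
noncomputable def TBK (B K : ℝ → ℝ → ℝ) (g : ℝ → ℝ) (h : ℝ → ℝ) (c : ℝ) : ℝ :=
  ∫ c₁ in Ioi (0:ℝ), B c c₁ * K c c₁ * h c₁ * g c₁

/-- `T_{BK}* m(c) := ∫₀^∞ B(c₁,c)K(c₁,c) m(c₁) g(c₁) dc₁`. -/
noncomputable def TBKstar (B K : ℝ → ℝ → ℝ) (g : ℝ → ℝ) (m : ℝ → ℝ) (c : ℝ) : ℝ :=
  ∫ c₁ in Ioi (0:ℝ), B c₁ c * K c₁ c * m c₁ * g c₁

/-- Right-hand side of the mean-opinion equation `∂ₜ m_w = T_{BK} m_w − Γ_{BK} m_w`. -/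
noncomputable def contRHS (B K : ℝ → ℝ → ℝ) (g : ℝ → ℝ) (mw : ℝ → ℝ → ℝ) (c t : ℝ) : ℝ :=
  TBK B K g (fun c' => mw c' t) c - GamBK B K g c * mw c t

lemma integral_netMeasure {g : ℝ → ℝ} (hg : Measurable g) (hg0 : ∀ c, 0 ≤ g c) (f : ℝ → ℝ) :
    ∫ c, f c ∂(netMeasure g) = ∫ c in Ioi (0:ℝ), g c * f c := by
  have h1 : netMeasure g = (volume.restrict (Ioi (0:ℝ))).withDensity
      (fun c => ((Real.toNNReal (g c) : NNReal) : ENNReal)) := rfl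
  rw [h1, integral_withDensity_eq_integral_smul hg.real_toNNReal]
  refine integral_congr_ae (Filter.Eventually.of_forall fun c => ?_)
  simp [NNReal.smul_def, Real.coe_toNNReal _ (hg0 c)]

lemma netMeasure_prob {g : ℝ → ℝ} (hg : Measurable g) (hg0 : ∀ c, 0 ≤ g c)
    (hgp : ∫ c in Ioi (0:ℝ), g c = 1) : IsProbabilityMeasure (netMeasure g) := by
  constructor
  have hgint : IntegrableOn g (Ioi (0:ℝ)) := by
    by_contra h
    rw [integral_undef h] at hgp; norm_num at hgp
  rw [netMeasure, withDensity_apply _ MeasurableSet.univ, Measure.restrict_univ,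
    ← ofReal_integral_eq_lintegral_ofReal hgint (Filter.Eventually.of_forall hg0), hgp]
  simp

lemma integrable_of_ae_bound {α : Type*} [MeasurableSpace α] {ν : Measure α} [IsFiniteMeasure ν]
    {f : α → ℝ} {C : ℝ} (hf : AEStronglyMeasurable f ν) (h : ∀ᵐ x ∂ν, |f x| ≤ C) :
    Integrable f ν :=
  (integrable_const C).mono' hf (by simpa [Real.norm_eq_abs] using h)

lemma abs_mul3_le {a b c A B C : ℝ} (ha : |a| ≤ A) (hb : |b| ≤ B) (hc : |c| ≤ C) :
    |a * b * c| ≤ A * B * C := by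
  rw [abs_mul, abs_mul]
  have h0a := abs_nonneg a; have h0b := abs_nonneg b; have h0c := abs_nonneg c
  exact mul_le_mul (mul_le_mul ha hb h0b (h0a.trans ha)) hc h0c
    (mul_nonneg (h0a.trans ha) (h0b.trans hb))

lemma integral_cauchy_schwarz {α : Type*} [MeasurableSpace α] {ν : Measure α}
    {f h : α → ℝ} (hf : AEStronglyMeasurable f ν) (hh : AEStronglyMeasurable h ν)
    (hf2 : Integrable (fun x => f x ^ 2) ν) (hh2 : Integrable (fun x => h x ^ 2) ν) :
    (∫ x, f x * h x ∂ν) ^ 2 ≤ (∫ x, f x ^ 2 ∂ν) * (∫ x, h x ^ 2 ∂ν) := by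
  have hfh : Integrable (fun x => f x * h x) ν := by
    refine ((hf2.add hh2).div_const 2).mono' (hf.mul hh) ?_
    refine Filter.Eventually.of_forall fun x => ?_
    simp only [Real.norm_eq_abs, abs_mul, Pi.add_apply]
    nlinarith [sq_nonneg (|f x| - |h x|), sq_abs (f x), sq_abs (h x),
      abs_nonneg (f x), abs_nonneg (h x)]
  have key : ∀ lam : ℝ, 0 ≤ (∫ x, h x ^ 2 ∂ν) * (lam * lam) +
      (2 * ∫ x, f x * h x ∂ν) * lam + ∫ x, f x ^ 2 ∂ν := by
    intro lam
    have h0 : 0 ≤ ∫ x, (f x + lam * h x) ^ 2 ∂ν := integral_nonneg fun x => sq_nonneg _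
    have hexp : ∫ x, (f x + lam * h x) ^ 2 ∂ν =
        (∫ x, f x ^ 2 ∂ν) + (2 * lam) * (∫ x, f x * h x ∂ν) + lam ^ 2 * ∫ x, h x ^ 2 ∂ν := by
      have h1 : Integrable (fun x => (2 * lam) * (f x * h x)) ν := hfh.const_mul _
      have h2 : Integrable (fun x => lam ^ 2 * h x ^ 2) ν := hh2.const_mul _
      have hA : Integrable (fun x => f x ^ 2 + (2 * lam) * (f x * h x)) ν := hf2.add h1
      have : ∀ x, (f x + lam * h x) ^ 2
          = (f x ^ 2 + (2 * lam) * (f x * h x)) + lam ^ 2 * h x ^ 2 := fun x => by ring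
      rw [integral_congr_ae (Filter.Eventually.of_forall this),
        integral_add hA h2, integral_add hf2 h1, integral_const_mul, integral_const_mul]
    nlinarith [h0, hexp]
  have hd := discrim_le_zero key
  rw [discrim] at hd
  nlinarith [hd]

set_option maxHeartbeats 2000000 in
/-- Theorem 5 (continuous opinion model): along solutions of the mean-opinion equation,
`∫ m m_w(·,t) dμ = ρ_w` is conserved and the weighted `L²` distance to `ρ_w` decays
exponentially; hence `m_w^∞ ≡ ρ_w` is the asymptotically stable equilibrium. -/
theorem continuous_opinion_convergence
    (g : ℝ → ℝ) (hg_meas : Measurable g) (hg_nonneg : ∀ c, 0 ≤ g c)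
    (hg_prob : ∫ c in Ioi (0:ℝ), g c = 1)
    (B K : ℝ → ℝ → ℝ)
    (hB_meas : Measurable (fun x : ℝ × ℝ => B x.1 x.2))
    (hK_meas : Measurable (fun x : ℝ × ℝ => K x.1 x.2))
    (hB_pos : ∀ᵐ x ∂((netMeasure g).prod (netMeasure g)), 0 < B x.1 x.2)
    (hK_pos : ∀ᵐ x ∂((netMeasure g).prod (netMeasure g)), 0 < K x.1 x.2)
    (hBK_bdd : ∃ C : ℝ, ∀ᵐ x ∂((netMeasure g).prod (netMeasure g)), |B x.1 x.2 * K x.1 x.2| ≤ C)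
    (m : ℝ → ℝ) (hm_meas : Measurable m)
    (hm_bdd : ∃ C : ℝ, ∀ᵐ c ∂(netMeasure g), |m c| ≤ C)
    (hm_nonneg : 0 ≤ᵐ[netMeasure g] m)
    (hm_eig : ∀ᵐ c ∂(netMeasure g), GamBK B K g c * m c = TBKstar B K g m c)
    (hm_norm : ∫ c, m c ∂(netMeasure g) = 1)
    (ψ : ℝ → ℝ) (hψ_meas : Measurable ψ) (hψ_pos : ∀ c, 0 < ψ c)
    (ν₂ : ℝ) (hν₂ : 0 < ν₂)
    (hlow : ∀ᵐ x ∂((netMeasure g).prod (netMeasure g)), ν₂ * ψ x.2 ≤ B x.1 x.2 * K x.1 x.2)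
    (hν₁_int : Integrable (fun c => (m c)^2 / ψ c) (netMeasure g))
    (mw : ℝ → ℝ → ℝ)
    (hmw_meas : Measurable (fun x : ℝ × ℝ => mw x.1 x.2))
    (hmw_bdd : ∃ C : ℝ, ∀ c t, |mw c t| ≤ C)
    (hmw_ode : ∀ c t, HasDerivAt (fun s => mw c s) (contRHS B K g mw c t) t)
    (ρw : ℝ) (hρw : ρw = ∫ c, m c * mw c 0 ∂(netMeasure g))
    (hdiff_mass : ∀ t, HasDerivAt (fun s => ∫ c, m c * mw c s ∂(netMeasure g))
      (∫ c, m c * contRHS B K g mw c t ∂(netMeasure g)) t)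
    (hdiff_E : ∀ t, HasDerivAt (fun s => ∫ c, m c * (mw c s - ρw)^2 ∂(netMeasure g))
      (∫ c, 2 * m c * (mw c t - ρw) * contRHS B K g mw c t ∂(netMeasure g)) t) :
    (∀ t : ℝ, 0 ≤ t → ∫ c, m c * mw c t ∂(netMeasure g) = ρw) ∧
    (∃ ν : ℝ, 0 < ν ∧ ∀ t : ℝ, 0 ≤ t →
      (∫ c, m c * (mw c t - ρw)^2 ∂(netMeasure g))
        ≤ (∫ c, m c * (mw c 0 - ρw)^2 ∂(netMeasure g)) * Real.exp (-ν * t)) := by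
  classical
  set μ := netMeasure g with hμdef
  haveI hPmeas : IsProbabilityMeasure μ := netMeasure_prob hg_meas hg_nonneg hg_prob
  have hInt : ∀ f : ℝ → ℝ, ∫ c, f c ∂μ = ∫ c in Ioi (0:ℝ), g c * f c :=
    integral_netMeasure hg_meas hg_nonneg
  set P := μ.prod μ with hPdef
  have hBKm : Measurable (fun x : ℝ × ℝ => B x.1 x.2 * K x.1 x.2) := hB_meas.mul hK_meas
  obtain ⟨C₀', hC₀'⟩ := hBK_bdd
  set C₀ := |C₀'| with hC₀def
  have hC₀ : ∀ᵐ x ∂P, |B x.1 x.2 * K x.1 x.2| ≤ C₀ :=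
    hC₀'.mono fun x hx => hx.trans (le_abs_self _)
  obtain ⟨Cm', hCm'⟩ := hm_bdd
  set Cm := |Cm'| with hCmdef
  have hCm : ∀ᵐ c ∂μ, |m c| ≤ Cm := hCm'.mono fun c hc => hc.trans (le_abs_self _)
  obtain ⟨Cw', hCw'⟩ := hmw_bdd
  set Cw := |Cw'| with hCwdef
  have hCw : ∀ c t, |mw c t| ≤ Cw := fun c t => (hCw' c t).trans (le_abs_self _)
  have hC₀0 : 0 ≤ C₀ := abs_nonneg _
  have hCm0 : 0 ≤ Cm := abs_nonneg _
  have hCw0 : 0 ≤ Cw := abs_nonneg _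
  have hm0 : ∀ᵐ c ∂μ, 0 ≤ m c := hm_nonneg.mono fun c h => by simpa using h
  -- lifted a.e. facts on the product
  have hmfb : ∀ᵐ x : ℝ × ℝ ∂P, |m x.1| ≤ Cm :=
    (Measure.quasiMeasurePreserving_fst (μ := μ) (ν := μ)).ae hCm
  have hmf0 : ∀ᵐ x : ℝ × ℝ ∂P, 0 ≤ m x.1 :=
    (Measure.quasiMeasurePreserving_fst (μ := μ) (ν := μ)).ae hm0
  -- μ-representations of the operators
  have hGamr : ∀ c, GamBK B K g c = ∫ c₁, B c c₁ * K c c₁ ∂μ := by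
    intro c
    rw [hInt fun c₁ => B c c₁ * K c c₁]
    exact integral_congr_ae (Filter.Eventually.of_forall fun c₁ => by ring)
  have hTBKr : ∀ (h : ℝ → ℝ) (c : ℝ), TBK B K g h c = ∫ c₁, B c c₁ * K c c₁ * h c₁ ∂μ := by
    intro h c
    rw [hInt fun c₁ => B c c₁ * K c c₁ * h c₁]
    exact integral_congr_ae (Filter.Eventually.of_forall fun c₁ => by ring)
  have hTBKsr : ∀ c, TBKstar B K g m c = ∫ c₁, B c₁ c * K c₁ c * m c₁ ∂μ := by
    intro c
    rw [hInt fun c₁ => B c₁ c * K c₁ c * m c₁]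
    exact integral_congr_ae (Filter.Eventually.of_forall fun c₁ => by ring)
  -- measurability and bounds for the operators
  have hGam_meas : Measurable (GamBK B K g) := by
    have h1 : StronglyMeasurable fun c : ℝ => ∫ c₁, B c c₁ * K c c₁ ∂μ :=
      (hBKm.stronglyMeasurable).integral_prod_right'
    have h2 : GamBK B K g = fun c => ∫ c₁, B c c₁ * K c c₁ ∂μ := funext hGamr
    rw [h2]; exact h1.measurable
  have hGam_b : ∀ᵐ c ∂μ, |GamBK B K g c| ≤ C₀ := by
    filter_upwards [Measure.ae_ae_of_ae_prod hC₀] with c hc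
    rw [hGamr c]
    have h2 := norm_integral_le_of_norm_le (μ := μ) (f := fun c₁ => B c c₁ * K c c₁)
      (integrable_const C₀)
      (by filter_upwards [hc] with c₁ h1; rw [Real.norm_eq_abs]; exact h1)
    simpa [Real.norm_eq_abs] using h2
  have hTBKm : ∀ (h : ℝ → ℝ), Measurable h → Measurable (TBK B K g h) := by
    intro h hm
    have h1 : StronglyMeasurable fun c : ℝ => ∫ c₁, B c c₁ * K c c₁ * h c₁ ∂μ :=
      ((hBKm.mul (hm.comp measurable_snd)).stronglyMeasurable).integral_prod_right'
    have h2 : TBK B K g h = fun c => ∫ c₁, B c c₁ * K c c₁ * h c₁ ∂μ := funext (hTBKr h)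
    rw [h2]; exact h1.measurable
  have hTBKb : ∀ (h : ℝ → ℝ) (Ch : ℝ), (∀ c, |h c| ≤ Ch) →
      ∀ᵐ c ∂μ, |TBK B K g h c| ≤ C₀ * Ch := by
    intro h Ch hb
    filter_upwards [Measure.ae_ae_of_ae_prod hC₀] with c hc
    rw [hTBKr h c]
    have hbnd : ∀ᵐ c₁ ∂μ, ‖B c c₁ * K c c₁ * h c₁‖ ≤ C₀ * Ch := by
      filter_upwards [hc] with c₁ h1
      rw [Real.norm_eq_abs, abs_mul]
      exact mul_le_mul h1 (hb c₁) (abs_nonneg _) hC₀0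
    have h2 := norm_integral_le_of_norm_le (integrable_const (C₀ * Ch)) hbnd
    simpa [Real.norm_eq_abs] using h2
  -- Claim A: ∫ φ · (T χ) dμ as a double integral
  have claimA : ∀ (φ χ : ℝ → ℝ) (Cφ Cχ : ℝ), Measurable φ → Measurable χ →
      (∀ᵐ c ∂μ, |φ c| ≤ Cφ) → (∀ c, |χ c| ≤ Cχ) →
      ∫ c, φ c * (∫ c₁, B c c₁ * K c c₁ * χ c₁ ∂μ) ∂μ
        = ∫ x : ℝ × ℝ, B x.1 x.2 * K x.1 x.2 * φ x.1 * χ x.2 ∂P := by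
    intro φ χ Cφ Cχ hφm hχm hφb hχb
    have hFm : AEStronglyMeasurable (fun x : ℝ × ℝ => B x.1 x.2 * K x.1 x.2 * φ x.1 * χ x.2) P :=
      ((hBKm.mul (hφm.comp measurable_fst)).mul (hχm.comp measurable_snd)).aestronglyMeasurable
    have hφfb : ∀ᵐ x : ℝ × ℝ ∂P, |φ x.1| ≤ Cφ :=
      (Measure.quasiMeasurePreserving_fst (μ := μ) (ν := μ)).ae hφb
    have hFi : Integrable (fun x : ℝ × ℝ => B x.1 x.2 * K x.1 x.2 * φ x.1 * χ x.2) P := by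
      refine integrable_of_ae_bound (C := C₀ * Cφ * Cχ) hFm ?_
      filter_upwards [hC₀, hφfb] with x h1 h2
      exact abs_mul3_le h1 h2 (hχb x.2)
    have h1 : ∀ c, φ c * (∫ c₁, B c c₁ * K c c₁ * χ c₁ ∂μ)
        = ∫ c₁, B c c₁ * K c c₁ * φ c * χ c₁ ∂μ := by
      intro c
      rw [← integral_const_mul]
      exact integral_congr_ae (Filter.Eventually.of_forall fun c₁ => by ring)
    rw [integral_congr_ae (Filter.Eventually.of_forall h1)]
    exact integral_integral (f := fun c c₁ => B c c₁ * K c c₁ * φ c * χ c₁) hFi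
  -- Claim B: ∫ φ · Γ dμ as a double integral
  have claimB : ∀ (φ : ℝ → ℝ) (Cφ : ℝ), Measurable φ → (∀ᵐ c ∂μ, |φ c| ≤ Cφ) →
      ∫ c, φ c * GamBK B K g c ∂μ = ∫ x : ℝ × ℝ, B x.1 x.2 * K x.1 x.2 * φ x.1 ∂P := by
    intro φ Cφ hφm hφb
    have hφfb : ∀ᵐ x : ℝ × ℝ ∂P, |φ x.1| ≤ Cφ :=
      (Measure.quasiMeasurePreserving_fst (μ := μ) (ν := μ)).ae hφb
    have hFm : AEStronglyMeasurable (fun x : ℝ × ℝ => B x.1 x.2 * K x.1 x.2 * φ x.1) P :=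
      (hBKm.mul (hφm.comp measurable_fst)).aestronglyMeasurable
    have hFi : Integrable (fun x : ℝ × ℝ => B x.1 x.2 * K x.1 x.2 * φ x.1) P := by
      refine integrable_of_ae_bound (C := C₀ * Cφ) hFm ?_
      filter_upwards [hC₀, hφfb] with x h1 h2
      rw [abs_mul]
      exact mul_le_mul h1 h2 (abs_nonneg _) hC₀0
    have h1 : ∀ c, φ c * GamBK B K g c = ∫ c₁, B c c₁ * K c c₁ * φ c ∂μ := by
      intro c
      rw [hGamr c, ← integral_const_mul]
      exact integral_congr_ae (Filter.Eventually.of_forall fun c₁ => by ring)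
    rw [integral_congr_ae (Filter.Eventually.of_forall h1)]
    exact integral_integral (f := fun c c₁ => B c c₁ * K c c₁ * φ c) hFi
  -- Claim C: swapping and using the eigenvector equation
  have claimC : ∀ (χ : ℝ → ℝ) (Cχ : ℝ), Measurable χ → (∀ c, |χ c| ≤ Cχ) →
      ∫ x : ℝ × ℝ, B x.1 x.2 * K x.1 x.2 * m x.1 * χ x.2 ∂P
        = ∫ c, (m c * χ c) * GamBK B K g c ∂μ := by
    intro χ Cχ hχm hχb
    have hFm : AEStronglyMeasurable (fun x : ℝ × ℝ => B x.1 x.2 * K x.1 x.2 * m x.1 * χ x.2) P :=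
      ((hBKm.mul (hm_meas.comp measurable_fst)).mul (hχm.comp measurable_snd)).aestronglyMeasurable
    have hFi : Integrable (fun x : ℝ × ℝ => B x.1 x.2 * K x.1 x.2 * m x.1 * χ x.2) P := by
      refine integrable_of_ae_bound (C := C₀ * Cm * Cχ) hFm ?_
      filter_upwards [hC₀, hmfb] with x h1 h2
      exact abs_mul3_le h1 h2 (hχb x.2)
    have hii := integral_integral (f := fun c c₁ => B c c₁ * K c c₁ * m c * χ c₁) hFi
    have hswap := integral_integral_swap (f := fun c c₁ => B c c₁ * K c c₁ * m c * χ c₁) hFi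
    rw [← hii, hswap]
    have h1 : ∀ c₁, (∫ c, B c c₁ * K c c₁ * m c * χ c₁ ∂μ)
        = TBKstar B K g m c₁ * χ c₁ := by
      intro c₁
      rw [hTBKsr c₁, ← integral_mul_const]
    rw [integral_congr_ae (Filter.Eventually.of_forall h1)]
    refine integral_congr_ae ?_
    filter_upwards [hm_eig] with c hc
    rw [← hc]; ring
  -- derivative of the mass is zero
  have hmass0 : ∀ t, ∫ c, m c * contRHS B K g mw c t ∂μ = 0 := by
    intro t
    have hhm : Measurable (fun c => mw c t) :=
      hmw_meas.comp (measurable_id.prodMk measurable_const)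
    have hhb : ∀ c, |mw c t| ≤ Cw := fun c => hCw c t
    have hf1 : Integrable (fun c => m c * TBK B K g (fun c' => mw c' t) c) μ := by
      refine integrable_of_ae_bound (C := Cm * (C₀ * Cw))
        ((hm_meas.mul (hTBKm _ hhm)).aestronglyMeasurable) ?_
      filter_upwards [hCm, hTBKb _ Cw hhb] with c h1 h2
      rw [abs_mul]
      exact mul_le_mul h1 h2 (abs_nonneg _) hCm0
    have hf2 : Integrable (fun c => m c * (GamBK B K g c * mw c t)) μ := by
      refine integrable_of_ae_bound (C := Cm * (C₀ * Cw))
        ((hm_meas.mul (hGam_meas.mul hhm)).aestronglyMeasurable) ?_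
      filter_upwards [hCm, hGam_b] with c h1 h2
      rw [abs_mul, abs_mul]
      exact mul_le_mul h1 (mul_le_mul h2 (hhb c) (abs_nonneg _) hC₀0)
        (mul_nonneg (abs_nonneg _) (abs_nonneg _)) hCm0
    have hsplit : ∫ c, m c * contRHS B K g mw c t ∂μ
        = (∫ c, m c * TBK B K g (fun c' => mw c' t) c ∂μ)
          - ∫ c, m c * (GamBK B K g c * mw c t) ∂μ := by
      rw [← integral_sub hf1 hf2]
      refine integral_congr_ae (Filter.Eventually.of_forall fun c => ?_)
      simp only [contRHS]; ring
    rw [hsplit]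
    have e1 : ∫ c, m c * TBK B K g (fun c' => mw c' t) c ∂μ
        = ∫ x : ℝ × ℝ, B x.1 x.2 * K x.1 x.2 * m x.1 * mw x.2 t ∂P := by
      have hA := claimA m (fun c => mw c t) Cm Cw hm_meas hhm hCm hhb
      rw [← hA]
      refine integral_congr_ae (Filter.Eventually.of_forall fun c => ?_)
      simp only [hTBKr]
    have e2 := claimC (fun c => mw c t) Cw hhm hhb
    rw [e1, e2, sub_eq_zero]
    exact integral_congr_ae (Filter.Eventually.of_forall fun c => by ring)
  -- conservation of the mean opinion
  have hMconst : ∀ t, ∫ c, m c * mw c t ∂μ = ρw := by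
    have hd : ∀ s, HasDerivAt (fun s => ∫ c, m c * mw c s ∂μ) 0 s := by
      intro s
      have h2 := hdiff_mass s
      rwa [hmass0 s] at h2
    intro t
    have h3 := is_const_of_deriv_eq_zero (𝕜 := ℝ) (f := fun s => ∫ c, m c * mw c s ∂μ)
      (fun s => (hd s).differentiableAt) (fun s => (hd s).deriv) t 0
    rw [h3, ← hρw]
  -- a.e. rewriting of the right-hand side in terms of u = mw - ρw
  have hcontR : ∀ t, ∀ᵐ c ∂μ, contRHS B K g mw c t
      = (∫ c₁, B c c₁ * K c c₁ * (mw c₁ t - ρw) ∂μ) - GamBK B K g c * (mw c t - ρw) := by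
    intro t
    filter_upwards [Measure.ae_ae_of_ae_prod hC₀] with c hc
    have hBKc : Measurable (fun c₁ => B c c₁ * K c c₁) :=
      hBKm.comp (measurable_const.prodMk measurable_id)
    have hBKci : Integrable (fun c₁ => B c c₁ * K c c₁) μ :=
      integrable_of_ae_bound (C := C₀) hBKc.aestronglyMeasurable hc
    have hum : Measurable (fun c₁ => mw c₁ t - ρw) :=
      (hmw_meas.comp (measurable_id.prodMk measurable_const)).sub measurable_const
    have hi1 : Integrable (fun c₁ => B c c₁ * K c c₁ * (mw c₁ t - ρw)) μ := by
      refine integrable_of_ae_bound (C := C₀ * (Cw + |ρw|))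
        ((hBKc.mul hum).aestronglyMeasurable) ?_
      filter_upwards [hc] with c₁ h1
      rw [abs_mul]
      refine mul_le_mul h1 ((abs_sub _ _).trans (add_le_add (hCw c₁ t) le_rfl))
        (abs_nonneg _) hC₀0
    have hi2 : Integrable (fun c₁ => B c c₁ * K c c₁ * ρw) μ := hBKci.mul_const ρw
    have e1 : TBK B K g (fun c' => mw c' t) c
        = (∫ c₁, B c c₁ * K c c₁ * (mw c₁ t - ρw) ∂μ) + GamBK B K g c * ρw := by
      rw [hTBKr, hGamr, ← integral_mul_const, ← integral_add hi1 hi2]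
      exact integral_congr_ae (Filter.Eventually.of_forall fun c₁ => by ring)
    simp only [contRHS]
    rw [e1]; ring
  -- positivity of ν₁
  have hν₁nonneg : (0:ℝ) ≤ ∫ c, m c ^ 2 / ψ c ∂μ :=
    integral_nonneg fun c => div_nonneg (sq_nonneg _) (hψ_pos c).le
  have hν₁pos : (0:ℝ) < ∫ c, m c ^ 2 / ψ c ∂μ := by
    rcases hν₁nonneg.lt_or_eq with h | h
    · exact h
    · exfalso
      have hz : (fun c => m c ^ 2 / ψ c) =ᵐ[μ] 0 := by
        rw [← integral_eq_zero_iff_of_nonneg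
          (fun c => div_nonneg (sq_nonneg _) (hψ_pos c).le) hν₁_int]
        exact h.symm
      have hmz : m =ᵐ[μ] 0 := by
        filter_upwards [hz] with c hc
        have h2 : m c ^ 2 = 0 := by
          rcases div_eq_zero_iff.mp hc with h3 | h3
          · exact h3
          · exact absurd h3 (hψ_pos c).ne'
        simpa using pow_eq_zero_iff (n := 2) (by norm_num) |>.mp h2
      rw [integral_congr_ae hmz] at hm_norm
      simp at hm_norm
  -- the key differential inequality
  have hkey : ∀ t, (∫ c, 2 * m c * (mw c t - ρw) * contRHS B K g mw c t ∂μ)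
      ≤ -(ν₂ / (∫ c, m c ^ 2 / ψ c ∂μ)) * ∫ c, m c * (mw c t - ρw)^2 ∂μ := by
    intro t
    obtain ⟨u, hudef⟩ : ∃ u : ℝ → ℝ, u = fun c => mw c t - ρw := ⟨_, rfl⟩
    have hu_app : ∀ c, mw c t - ρw = u c := fun c => by rw [hudef]
    have hcR := hcontR t
    simp only [hu_app] at hcR ⊢
    have hum : Measurable u := by
      rw [hudef]
      exact (hmw_meas.comp (measurable_id.prodMk measurable_const)).sub measurable_const
    have hub : ∀ c, |u c| ≤ Cw + |ρw| := by
      intro c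
      rw [hudef]
      exact (abs_sub _ _).trans (add_le_add (hCw c t) le_rfl)
    set Cu : ℝ := Cw + |ρw| with hCudef
    have hCu0 : 0 ≤ Cu := add_nonneg hCw0 (abs_nonneg _)
    -- basic integrability
    have hm_int : Integrable m μ :=
      integrable_of_ae_bound (C := Cm) hm_meas.aestronglyMeasurable hCm
    have hmu_int : Integrable (fun c => m c * u c) μ := by
      refine integrable_of_ae_bound (C := Cm * Cu) ((hm_meas.mul hum).aestronglyMeasurable) ?_
      filter_upwards [hCm] with c h1
      rw [abs_mul]; exact mul_le_mul h1 (hub c) (abs_nonneg _) hCm0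
    have hmu2_int : Integrable (fun c => m c * u c ^ 2) μ := by
      refine integrable_of_ae_bound (C := Cm * Cu ^ 2)
        ((hm_meas.mul (hum.pow_const 2)).aestronglyMeasurable) ?_
      filter_upwards [hCm] with c h1
      rw [abs_mul, abs_pow]
      exact mul_le_mul h1 (pow_le_pow_left₀ (abs_nonneg _) (hub c) 2)
        (pow_nonneg (abs_nonneg _) 2) hCm0
    have hmmw_int : Integrable (fun c => m c * mw c t) μ := by
      refine integrable_of_ae_bound (C := Cm * Cw)
        ((hm_meas.mul (hmw_meas.comp (measurable_id.prodMk measurable_const))).aestronglyMeasurable) ?_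
      filter_upwards [hCm] with c h1
      rw [abs_mul]; exact mul_le_mul h1 (hCw c t) (abs_nonneg _) hCm0
    -- zero mean of u against m
    have hZ : ∫ c, m c * u c ∂μ = 0 := by
      have h1 : (fun c => m c * u c) = fun c => m c * mw c t - m c * ρw := by
        funext c; rw [hudef]; ring
      rw [h1, integral_sub hmmw_int (hm_int.mul_const ρw), integral_mul_const, hMconst t,
        hm_norm]
      ring
    -- the inner transport integral
    have hTum : Measurable (fun c => ∫ c₁, B c c₁ * K c c₁ * u c₁ ∂μ) :=
      (((hBKm.mul (hum.comp measurable_snd)).stronglyMeasurable).integral_prod_right').measurable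
    have hTub : ∀ᵐ c ∂μ, |∫ c₁, B c c₁ * K c c₁ * u c₁ ∂μ| ≤ C₀ * Cu := by
      filter_upwards [Measure.ae_ae_of_ae_prod hC₀] with c hc
      have h2 := norm_integral_le_of_norm_le (μ := μ) (f := fun c₁ => B c c₁ * K c c₁ * u c₁)
        (integrable_const (C₀ * Cu))
        (by filter_upwards [hc] with c₁ h1
            rw [Real.norm_eq_abs, abs_mul]
            exact mul_le_mul h1 (hub c₁) (abs_nonneg _) hC₀0)
      simpa [Real.norm_eq_abs] using h2
    have hg1 : Integrable (fun c => (m c * u c) * (∫ c₁, B c c₁ * K c c₁ * u c₁ ∂μ)) μ := by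
      refine integrable_of_ae_bound (C := Cm * Cu * (C₀ * Cu))
        (((hm_meas.mul hum).mul hTum).aestronglyMeasurable) ?_
      filter_upwards [hCm, hTub] with c h1 h2
      rw [abs_mul, abs_mul]
      exact mul_le_mul (mul_le_mul h1 (hub c) (abs_nonneg _) hCm0) h2 (abs_nonneg _)
        (mul_nonneg hCm0 hCu0)
    have hg2 : Integrable (fun c => m c * u c * u c * GamBK B K g c) μ := by
      refine integrable_of_ae_bound (C := Cm * Cu * Cu * C₀)
        ((((hm_meas.mul hum).mul hum).mul hGam_meas).aestronglyMeasurable) ?_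
      filter_upwards [hCm, hGam_b] with c h1 h2
      rw [abs_mul]
      refine mul_le_mul ?_ h2 (abs_nonneg _) (mul_nonneg (mul_nonneg hCm0 hCu0) hCu0)
      rw [abs_mul, abs_mul]
      exact mul_le_mul (mul_le_mul h1 (hub c) (abs_nonneg _) hCm0) (hub c) (abs_nonneg _)
        (mul_nonneg hCm0 hCu0)
    -- the derivative of E as a combination of two integrals
    have hLHS : ∫ c, 2 * m c * u c * contRHS B K g mw c t ∂μ
        = 2 * ((∫ c, (m c * u c) * (∫ c₁, B c c₁ * K c c₁ * u c₁ ∂μ) ∂μ)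
             - ∫ c, m c * u c * u c * GamBK B K g c ∂μ) := by
      rw [← integral_sub hg1 hg2, ← integral_const_mul]
      refine integral_congr_ae ?_
      filter_upwards [hcR] with c hc
      rw [hc]; ring
    -- product representation of the three pieces
    have hmub : ∀ᵐ c ∂μ, |m c * u c| ≤ Cm * Cu := by
      filter_upwards [hCm] with c h1
      rw [abs_mul]; exact mul_le_mul h1 (hub c) (abs_nonneg _) hCm0
    have hmuub : ∀ᵐ c ∂μ, |m c * u c * u c| ≤ Cm * Cu * Cu := by
      filter_upwards [hCm] with c h1
      rw [abs_mul, abs_mul]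
      exact mul_le_mul (mul_le_mul h1 (hub c) (abs_nonneg _) hCm0) (hub c) (abs_nonneg _)
        (mul_nonneg hCm0 hCu0)
    have hJ1 : ∫ c, (m c * u c) * (∫ c₁, B c c₁ * K c c₁ * u c₁ ∂μ) ∂μ
        = ∫ x : ℝ × ℝ, B x.1 x.2 * K x.1 x.2 * (m x.1 * u x.1) * u x.2 ∂P := by
      simpa only [] using claimA (fun c => m c * u c) u (Cm * Cu) Cu (hm_meas.mul hum) hum
        hmub hub
    have hJ2 : ∫ c, m c * u c * u c * GamBK B K g c ∂μ
        = ∫ x : ℝ × ℝ, B x.1 x.2 * K x.1 x.2 * (m x.1 * u x.1 * u x.1) ∂P := by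
      simpa only [] using claimB (fun c => m c * u c * u c) (Cm * Cu * Cu)
        ((hm_meas.mul hum).mul hum) hmuub
    have hJ3 : ∫ x : ℝ × ℝ, B x.1 x.2 * K x.1 x.2 * m x.1 * u x.2 ^ 2 ∂P
        = ∫ c, m c * u c ^ 2 * GamBK B K g c ∂μ := by
      simpa only [] using claimC (fun c => u c ^ 2) (Cu ^ 2) (hum.pow_const 2)
        (fun c => by rw [abs_pow]; exact pow_le_pow_left₀ (abs_nonneg _) (hub c) 2)
    have hG23 : ∫ x : ℝ × ℝ, B x.1 x.2 * K x.1 x.2 * (m x.1 * u x.1 * u x.1) ∂P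
        = ∫ x : ℝ × ℝ, B x.1 x.2 * K x.1 x.2 * m x.1 * u x.2 ^ 2 ∂P := by
      rw [← hJ2, hJ3]
      exact integral_congr_ae (Filter.Eventually.of_forall fun c => by ring)
    -- integrability of the product pieces
    have humf : ∀ᵐ x : ℝ × ℝ ∂P, |u x.1| ≤ Cu :=
      Filter.Eventually.of_forall fun x => hub x.1
    have hG1i : Integrable (fun x : ℝ × ℝ => B x.1 x.2 * K x.1 x.2 * (m x.1 * u x.1) * u x.2) P := by
      refine integrable_of_ae_bound (C := C₀ * (Cm * Cu) * Cu)
        (((hBKm.mul ((hm_meas.comp measurable_fst).mul (hum.comp measurable_fst))).mul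
          (hum.comp measurable_snd)).aestronglyMeasurable) ?_
      filter_upwards [hC₀, hmfb] with x h1 h2
      refine abs_mul3_le h1 ?_ (hub x.2)
      rw [abs_mul]; exact mul_le_mul h2 (hub x.1) (abs_nonneg _) hCm0
    have hG2i : Integrable (fun x : ℝ × ℝ => B x.1 x.2 * K x.1 x.2 * (m x.1 * u x.1 * u x.1)) P := by
      refine integrable_of_ae_bound (C := C₀ * (Cm * Cu * Cu))
        ((hBKm.mul (((hm_meas.comp measurable_fst).mul (hum.comp measurable_fst)).mul
          (hum.comp measurable_fst))).aestronglyMeasurable) ?_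
      filter_upwards [hC₀, hmfb] with x h1 h2
      rw [abs_mul]
      refine mul_le_mul h1 ?_ (abs_nonneg _) hC₀0
      rw [abs_mul, abs_mul]
      exact mul_le_mul (mul_le_mul h2 (hub x.1) (abs_nonneg _) hCm0) (hub x.1) (abs_nonneg _)
        (mul_nonneg hCm0 hCu0)
    have hG3i : Integrable (fun x : ℝ × ℝ => B x.1 x.2 * K x.1 x.2 * m x.1 * u x.2 ^ 2) P := by
      refine integrable_of_ae_bound (C := C₀ * Cm * Cu ^ 2)
        (((hBKm.mul (hm_meas.comp measurable_fst)).mul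
          ((hum.comp measurable_snd).pow_const 2)).aestronglyMeasurable) ?_
      filter_upwards [hC₀, hmfb] with x h1 h2
      refine abs_mul3_le h1 h2 ?_
      rw [abs_pow]; exact pow_le_pow_left₀ (abs_nonneg _) (hub x.2) 2
    have hDInt : Integrable (fun x : ℝ × ℝ => B x.1 x.2 * K x.1 x.2 * m x.1 * (u x.1 - u x.2) ^ 2) P := by
      refine integrable_of_ae_bound (C := C₀ * Cm * (Cu + Cu) ^ 2)
        (((hBKm.mul (hm_meas.comp measurable_fst)).mul
          (((hum.comp measurable_fst).sub (hum.comp measurable_snd)).pow_const 2)).aestronglyMeasurable) ?_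
      filter_upwards [hC₀, hmfb] with x h1 h2
      refine abs_mul3_le h1 h2 ?_
      rw [abs_pow]
      refine pow_le_pow_left₀ (abs_nonneg _) ((abs_sub _ _).trans (add_le_add (hub x.1) (hub x.2))) 2
    -- expansion of the Dirichlet form
    have hD : ∫ x : ℝ × ℝ, B x.1 x.2 * K x.1 x.2 * m x.1 * (u x.1 - u x.2) ^ 2 ∂P
        = (∫ x : ℝ × ℝ, B x.1 x.2 * K x.1 x.2 * (m x.1 * u x.1 * u x.1) ∂P)
          - 2 * (∫ x : ℝ × ℝ, B x.1 x.2 * K x.1 x.2 * (m x.1 * u x.1) * u x.2 ∂P)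
          + ∫ x : ℝ × ℝ, B x.1 x.2 * K x.1 x.2 * m x.1 * u x.2 ^ 2 ∂P := by
      have e1 : ∀ x : ℝ × ℝ, B x.1 x.2 * K x.1 x.2 * m x.1 * (u x.1 - u x.2) ^ 2
          = (B x.1 x.2 * K x.1 x.2 * (m x.1 * u x.1 * u x.1)
              - 2 * (B x.1 x.2 * K x.1 x.2 * (m x.1 * u x.1) * u x.2))
            + B x.1 x.2 * K x.1 x.2 * m x.1 * u x.2 ^ 2 := fun x => by ring
      have hsub : Integrable (fun x : ℝ × ℝ => B x.1 x.2 * K x.1 x.2 * (m x.1 * u x.1 * u x.1)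
          - 2 * (B x.1 x.2 * K x.1 x.2 * (m x.1 * u x.1) * u x.2)) P := by
        exact hG2i.sub (hG1i.const_mul 2)
      rw [integral_congr_ae (Filter.Eventually.of_forall e1), integral_add hsub hG3i,
        integral_sub hG2i (hG1i.const_mul 2), integral_const_mul]
    have hE'eq : ∫ c, 2 * m c * u c * contRHS B K g mw c t ∂μ
        = -(∫ x : ℝ × ℝ, B x.1 x.2 * K x.1 x.2 * m x.1 * (u x.1 - u x.2) ^ 2 ∂P) := by
      rw [hLHS, hJ1, hJ2, hD, hG23]
      ring
    -- comparison with the ψ-form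
    have hψm2 : Measurable (fun x : ℝ × ℝ => ψ x.2 * m x.1 * (u x.1 - u x.2) ^ 2) :=
      ((hψ_meas.comp measurable_snd).mul (hm_meas.comp measurable_fst)).mul
        (((hum.comp measurable_fst).sub (hum.comp measurable_snd)).pow_const 2)
    have hDψi : Integrable (fun x : ℝ × ℝ => ψ x.2 * m x.1 * (u x.1 - u x.2) ^ 2) P := by
      refine Integrable.mono' (hDInt.div_const ν₂) hψm2.aestronglyMeasurable ?_
      filter_upwards [hlow, hmf0] with x h1 h2
      rw [Real.norm_eq_abs,
        abs_of_nonneg (mul_nonneg (mul_nonneg (hψ_pos _).le h2) (sq_nonneg _)),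
        le_div_iff₀ hν₂]
      nlinarith [mul_nonneg (sub_nonneg.2 h1) (mul_nonneg h2 (sq_nonneg (u x.1 - u x.2)))]
    have hDψ_le : ν₂ * (∫ x : ℝ × ℝ, ψ x.2 * m x.1 * (u x.1 - u x.2) ^ 2 ∂P)
        ≤ ∫ x : ℝ × ℝ, B x.1 x.2 * K x.1 x.2 * m x.1 * (u x.1 - u x.2) ^ 2 ∂P := by
      rw [← integral_const_mul]
      refine integral_mono_ae (hDψi.const_mul ν₂) hDInt ?_
      filter_upwards [hlow, hmf0] with x h1 h2
      nlinarith [mul_nonneg (sub_nonneg.2 h1) (mul_nonneg h2 (sq_nonneg (u x.1 - u x.2)))]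
    have hDψ0 : 0 ≤ ∫ x : ℝ × ℝ, ψ x.2 * m x.1 * (u x.1 - u x.2) ^ 2 ∂P := by
      refine integral_nonneg_of_ae ?_
      filter_upwards [hmf0] with x h2
      exact mul_nonneg (mul_nonneg (hψ_pos _).le h2) (sq_nonneg _)
    -- Cauchy–Schwarz
    have hAm : AEStronglyMeasurable
        (fun x : ℝ × ℝ => Real.sqrt (m x.1) * u x.1 * (m x.2 / Real.sqrt (ψ x.2))) P :=
      (((Real.continuous_sqrt.measurable.comp (hm_meas.comp measurable_fst)).mul
        (hum.comp measurable_fst)).mul ((hm_meas.comp measurable_snd).div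
          (Real.continuous_sqrt.measurable.comp (hψ_meas.comp measurable_snd)))).aestronglyMeasurable
    have hBm : AEStronglyMeasurable
        (fun x : ℝ × ℝ => Real.sqrt (m x.1) * Real.sqrt (ψ x.2) * (u x.1 - u x.2)) P :=
      (((Real.continuous_sqrt.measurable.comp (hm_meas.comp measurable_fst)).mul
        (Real.continuous_sqrt.measurable.comp (hψ_meas.comp measurable_snd))).mul
        ((hum.comp measurable_fst).sub (hum.comp measurable_snd))).aestronglyMeasurable
    have hA2eq : ∀ᵐ x : ℝ × ℝ ∂P, (Real.sqrt (m x.1) * u x.1 * (m x.2 / Real.sqrt (ψ x.2))) ^ 2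
        = (m x.1 * u x.1 ^ 2) * (m x.2 ^ 2 / ψ x.2) := by
      filter_upwards [hmf0] with x h2
      rw [mul_pow, mul_pow, Real.sq_sqrt h2, div_pow, Real.sq_sqrt (hψ_pos x.2).le]
    have hB2eq : ∀ᵐ x : ℝ × ℝ ∂P, (Real.sqrt (m x.1) * Real.sqrt (ψ x.2) * (u x.1 - u x.2)) ^ 2
        = ψ x.2 * m x.1 * (u x.1 - u x.2) ^ 2 := by
      filter_upwards [hmf0] with x h2
      rw [mul_pow, mul_pow, Real.sq_sqrt h2, Real.sq_sqrt (hψ_pos x.2).le]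
      ring
    have hA2int : Integrable
        (fun x : ℝ × ℝ => (Real.sqrt (m x.1) * u x.1 * (m x.2 / Real.sqrt (ψ x.2))) ^ 2) P :=
      (hmu2_int.mul_prod hν₁_int).congr (hA2eq.mono fun x h => h.symm)
    have hB2int : Integrable
        (fun x : ℝ × ℝ => (Real.sqrt (m x.1) * Real.sqrt (ψ x.2) * (u x.1 - u x.2)) ^ 2) P :=
      hDψi.congr (hB2eq.mono fun x h => h.symm)
    have hA2val : ∫ x : ℝ × ℝ, (Real.sqrt (m x.1) * u x.1 * (m x.2 / Real.sqrt (ψ x.2))) ^ 2 ∂P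
        = (∫ c, m c * u c ^ 2 ∂μ) * (∫ c, m c ^ 2 / ψ c ∂μ) := by
      rw [integral_congr_ae hA2eq]
      exact integral_prod_mul (f := fun c => m c * u c ^ 2) (g := fun c => m c ^ 2 / ψ c)
    have hB2val : ∫ x : ℝ × ℝ, (Real.sqrt (m x.1) * Real.sqrt (ψ x.2) * (u x.1 - u x.2)) ^ 2 ∂P
        = ∫ x : ℝ × ℝ, ψ x.2 * m x.1 * (u x.1 - u x.2) ^ 2 ∂P :=
      integral_congr_ae hB2eq
    have hABeq : ∀ᵐ x : ℝ × ℝ ∂P, (Real.sqrt (m x.1) * u x.1 * (m x.2 / Real.sqrt (ψ x.2)))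
        * (Real.sqrt (m x.1) * Real.sqrt (ψ x.2) * (u x.1 - u x.2))
        = (m x.1 * u x.1 ^ 2) * m x.2 - (m x.1 * u x.1) * (m x.2 * u x.2) := by
      filter_upwards [hmf0] with x h2
      have hs : Real.sqrt (ψ x.2) ≠ 0 := (Real.sqrt_pos.mpr (hψ_pos x.2)).ne'
      have hm1 : Real.sqrt (m x.1) * Real.sqrt (m x.1) = m x.1 := Real.mul_self_sqrt h2
      have key : (Real.sqrt (m x.1) * u x.1 * (m x.2 / Real.sqrt (ψ x.2)))
          * (Real.sqrt (m x.1) * Real.sqrt (ψ x.2) * (u x.1 - u x.2))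
          = (Real.sqrt (m x.1) * Real.sqrt (m x.1)) * (Real.sqrt (ψ x.2) / Real.sqrt (ψ x.2))
            * (u x.1 * m x.2 * (u x.1 - u x.2)) := by ring
      rw [key, hm1, div_self hs]
      ring
    have hprod1 : Integrable (fun x : ℝ × ℝ => (m x.1 * u x.1 ^ 2) * m x.2) P :=
      hmu2_int.mul_prod hm_int
    have hprod2 : Integrable (fun x : ℝ × ℝ => (m x.1 * u x.1) * (m x.2 * u x.2)) P :=
      hmu_int.mul_prod hmu_int
    have hABval : ∫ x : ℝ × ℝ, (Real.sqrt (m x.1) * u x.1 * (m x.2 / Real.sqrt (ψ x.2)))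
        * (Real.sqrt (m x.1) * Real.sqrt (ψ x.2) * (u x.1 - u x.2)) ∂P
        = ∫ c, m c * u c ^ 2 ∂μ := by
      rw [integral_congr_ae hABeq, integral_sub hprod1 hprod2,
        integral_prod_mul (f := fun c => m c * u c ^ 2) (g := m),
        integral_prod_mul (f := fun c => m c * u c) (g := fun c => m c * u c),
        hm_norm, hZ]
      ring
    have hCS := integral_cauchy_schwarz hAm hBm hA2int hB2int
    rw [hABval, hA2val, hB2val] at hCS
    -- put the pieces together
    have hEt0 : 0 ≤ ∫ c, m c * u c ^ 2 ∂μ := by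
      refine integral_nonneg_of_ae ?_
      filter_upwards [hm0] with c h
      positivity
    rw [hE'eq]
    rcases hEt0.lt_or_eq with hpos | hzero
    · have h4 : (∫ c, m c * u c ^ 2 ∂μ) * (∫ c, m c * u c ^ 2 ∂μ)
          ≤ (∫ c, m c * u c ^ 2 ∂μ) * ((∫ c, m c ^ 2 / ψ c ∂μ)
            * ∫ x : ℝ × ℝ, ψ x.2 * m x.1 * (u x.1 - u x.2) ^ 2 ∂P) := by
        nlinarith [hCS]
      have h5 : (∫ c, m c * u c ^ 2 ∂μ) ≤ (∫ c, m c ^ 2 / ψ c ∂μ)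
          * ∫ x : ℝ × ℝ, ψ x.2 * m x.1 * (u x.1 - u x.2) ^ 2 ∂P :=
        le_of_mul_le_mul_left h4 hpos
      have h6 : ν₂ / (∫ c, m c ^ 2 / ψ c ∂μ) * (∫ c, m c * u c ^ 2 ∂μ)
          ≤ ν₂ * ∫ x : ℝ × ℝ, ψ x.2 * m x.1 * (u x.1 - u x.2) ^ 2 ∂P := by
        rw [div_mul_eq_mul_div, div_le_iff₀ hν₁pos]
        nlinarith [mul_le_mul_of_nonneg_left h5 hν₂.le]
      linarith [hDψ_le]
    · rw [← hzero]
      have h7 : 0 ≤ ν₂ * ∫ x : ℝ × ℝ, ψ x.2 * m x.1 * (u x.1 - u x.2) ^ 2 ∂P :=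
        mul_nonneg hν₂.le hDψ0
      linarith [hDψ_le]
  -- conclusion
  refine ⟨fun t _ => hMconst t, ⟨ν₂ / (∫ c, m c ^ 2 / ψ c ∂μ), div_pos hν₂ hν₁pos, ?_⟩⟩
  intro t ht
  set ν : ℝ := ν₂ / (∫ c, m c ^ 2 / ψ c ∂μ) with hνdef
  have hEderiv : ∀ s : ℝ, HasDerivAt
      (fun r => (∫ c, m c * (mw c r - ρw) ^ 2 ∂μ) * Real.exp (ν * r))
      ((∫ c, 2 * m c * (mw c s - ρw) * contRHS B K g mw c s ∂μ) * Real.exp (ν * s)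
        + (∫ c, m c * (mw c s - ρw) ^ 2 ∂μ) * (Real.exp (ν * s) * (ν * 1))) s := by
    intro s
    exact (hdiff_E s).mul (((hasDerivAt_id s).const_mul ν).exp)
  have hanti : Antitone (fun r => (∫ c, m c * (mw c r - ρw) ^ 2 ∂μ) * Real.exp (ν * r)) := by
    rw [← antitoneOn_univ]
    refine antitoneOn_of_deriv_nonpos convex_univ
      (Differentiable.continuous fun s => (hEderiv s).differentiableAt).continuousOn
      (fun s _ => ((hEderiv s).differentiableAt).differentiableWithinAt) ?_
    intro s _
    rw [(hEderiv s).deriv]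
    have hk := hkey s
    have hE0 : 0 ≤ ∫ c, m c * (mw c s - ρw) ^ 2 ∂μ := by
      refine integral_nonneg_of_ae ?_
      filter_upwards [hm0] with c h
      positivity
    have hexp := (Real.exp_pos (ν * s)).le
    nlinarith [mul_le_mul_of_nonneg_right hk hexp]
  have h3 := hanti ht
  have h4 : (∫ c, m c * (mw c t - ρw) ^ 2 ∂μ) * Real.exp (ν * t)
      ≤ ∫ c, m c * (mw c 0 - ρw) ^ 2 ∂μ := by
    simpa using h3
  calc (∫ c, m c * (mw c t - ρw) ^ 2 ∂μ)
      = ((∫ c, m c * (mw c t - ρw) ^ 2 ∂μ) * Real.exp (ν * t)) * Real.exp (-ν * t) := by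
        rw [mul_assoc, ← Real.exp_add, show ν * t + -ν * t = 0 by ring, Real.exp_zero, mul_one]
    _ ≤ (∫ c, m c * (mw c 0 - ρw) ^ 2 ∂μ) * Real.exp (-ν * t) :=
        mul_le_mul_of_nonneg_right h4 (Real.exp_pos _).le
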